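/- arXiv:2410.04607 — 4 statements merged into one kernel-verified Lean document; each statement's English description precedes it below -/
import Mathlib

section
/- Krausz's characterization: a simple graph G is a line graph (i.e., G ≅ L(H) for some graph H) if and only if the edge set of G can be partitioned into cliques such that every vertex of G lies in at most two of these cliques. -/
open SimpleGraph

/-- The graph on `Fin n` whose edges are the pairs in the list `l`. -/
def graphOfList (n : ℕ) (l : List (ℕ × ℕ)) : SimpleGraph (Fin n) :=
  SimpleGraph.fromRel (fun i j => (i.val, j.val) ∈ l)

/-- The claw `K_{1,3}`. -/
def claw : SimpleGraph (Fin 1 ⊕ Fin 3) := completeBipartiteGraph (Fin 1) (Fin 3)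

/-- The triangle `K₃`. -/
def K3 : SimpleGraph (Fin 3) := ⊤

/-- The complete graph `K₄`. -/
def K4 : SimpleGraph (Fin 4) := ⊤

/-- The paw graph: the claw `K_{1,3}` plus an edge joining two leaves. -/
def paw : SimpleGraph (Fin 4) := graphOfList 4 [(0,1),(0,2),(0,3),(1,2)]

/-- The diamond `K₄ − e`. -/
def diamond : SimpleGraph (Fin 4) := graphOfList 4 [(0,1),(0,2),(1,2),(1,3),(2,3)]

/-- `G` is a line graph: it is isomorphic to `L(H)` for some simple graph `H`. -/
def IsLineGraph {V : Type} (G : SimpleGraph V) : Prop :=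
  ∃ (W : Type) (H : SimpleGraph W), Nonempty (G ≃g H.lineGraph)

/-- `G` has an induced subgraph isomorphic to `X`. -/
def HasInducedCopy {V W : Type} (G : SimpleGraph V) (X : SimpleGraph W) : Prop :=
  ∃ S : Set V, Nonempty (G.induce S ≃g X)

/-- `a`, `b`, `c` form a triangle of `G`. -/
def IsTriangleOf {V : Type} (G : SimpleGraph V) (a b c : V) : Prop :=
  G.Adj a b ∧ G.Adj a c ∧ G.Adj b c

/-- The triangle `{a,b,c}` of `G` is odd: some vertex of `G` is adjacent to an odd
number of its vertices. -/
def IsOddTriangle {V : Type} (G : SimpleGraph V) (a b c : V) : Prop :=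
  IsTriangleOf G a b c ∧ ∃ v, Odd ((({a, b, c} : Set V) ∩ {x | G.Adj v x}).ncard)

/-- The triangle `{a,b,c}` of `G` is even: every vertex of `G` adjacent to some vertex
of the triangle is adjacent to exactly two of its vertices. -/
def IsEvenTriangle {V : Type} (G : SimpleGraph V) (a b c : V) : Prop :=
  IsTriangleOf G a b c ∧
    ∀ v, (G.Adj v a ∨ G.Adj v b ∨ G.Adj v c) →
      (({a, b, c} : Set V) ∩ {x | G.Adj v x}).ncard = 2

/-- A Krausz partition (line partition) of `G`: a family of cliques such that every
edge of `G` lies in exactly one of them and every vertex lies in at most two of them. -/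
def IsLinePartition {V : Type} (G : SimpleGraph V) (P : Set (Set V)) : Prop :=
  (∀ C ∈ P, G.IsClique C) ∧
  (∀ u w, G.Adj u w → ∃! C, C ∈ P ∧ u ∈ C ∧ w ∈ C) ∧
  (∀ v : V, ∀ C₁ ∈ P, ∀ C₂ ∈ P, ∀ C₃ ∈ P,
      v ∈ C₁ → v ∈ C₂ → v ∈ C₃ → C₁ = C₂ ∨ C₁ = C₃ ∨ C₂ = C₃)

/-!
The stars `{e | w ∈ e}` of a graph `H` form a line partition of `L(H)`: two distinct edges
share at most one end, and an edge has only two ends. Conversely, a line partition `P` of `G`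
is read as a graph `H` whose vertices are the cliques of `P` plus two private vertices per
vertex of `G`; each vertex `u` of `G` becomes the edge of `H` joining the cliques through `u`,
padded with private vertices of `u`. Two such edges share an end exactly when the vertices lie
in a common clique, i.e. are adjacent in `G`.
-/

theorem Sym2.eq_or_eq_or_eq_of_mem {W : Type*} {e : Sym2 W} {a b c : W}
    (ha : a ∈ e) (hb : b ∈ e) (hc : c ∈ e) : a = b ∨ a = c ∨ b = c := by
  induction e using Sym2.ind with
  | _ x y =>
    rw [Sym2.mem_iff] at ha hb hc
    rcases ha with rfl | rfl <;> rcases hb with rfl | rfl <;> rcases hc with rfl | rfl <;> tauto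

theorem IsLinePartition.comap {V V' : Type} {G : SimpleGraph V} {G' : SimpleGraph V'}
    {P : Set (Set V')} (f : G ≃g G') (hP : IsLinePartition G' P) :
    IsLinePartition G (Set.preimage f '' P) := by
  refine ⟨?_, fun u w huw => ?_, ?_⟩
  · rintro _ ⟨C, hC, rfl⟩ u hu w hw hne
    exact f.map_adj_iff.mp (hP.1 C hC hu hw (f.injective.ne hne))
  · obtain ⟨C, ⟨hC, hu, hw⟩, hCuniq⟩ := hP.2.1 _ _ (f.map_adj_iff.mpr huw)
    refine ⟨f ⁻¹' C, ⟨⟨C, hC, rfl⟩, hu, hw⟩, ?_⟩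
    rintro _ ⟨⟨D, hD, rfl⟩, hu', hw'⟩
    rw [hCuniq D ⟨hD, hu', hw'⟩]
  · rintro v _ ⟨C₁, h₁, rfl⟩ _ ⟨C₂, h₂, rfl⟩ _ ⟨C₃, h₃, rfl⟩ hv₁ hv₂ hv₃
    rcases hP.2.2 (f v) C₁ h₁ C₂ h₂ C₃ h₃ hv₁ hv₂ hv₃ with h | h | h <;> simp [h]

theorem isLinePartition_lineGraph {W : Type} (H : SimpleGraph W) :
    IsLinePartition H.lineGraph (Set.range fun w : W => {e : H.edgeSet | w ∈ (e : Sym2 W)}) := by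
  refine ⟨?_, fun e f hef => ?_, ?_⟩
  · rintro _ ⟨w, rfl⟩ e he f hf hne
    exact lineGraph_adj_iff_exists.mpr ⟨hne, w, he, hf⟩
  · obtain ⟨hne, w, he, hf⟩ := lineGraph_adj_iff_exists.mp hef
    refine ⟨_, ⟨⟨w, rfl⟩, he, hf⟩, ?_⟩
    rintro _ ⟨⟨w', rfl⟩, he', hf'⟩
    by_contra hww'
    have hne' : w' ≠ w := fun h => hww' (h ▸ rfl)
    exact hne (Subtype.ext (((Sym2.mem_and_mem_iff hne').mp ⟨he', he⟩).trans
      ((Sym2.mem_and_mem_iff hne').mp ⟨hf', hf⟩).symm))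
  · rintro e _ ⟨w₁, rfl⟩ _ ⟨w₂, rfl⟩ _ ⟨w₃, rfl⟩ h₁ h₂ h₃
    rcases Sym2.eq_or_eq_or_eq_of_mem h₁ h₂ h₃ with h | h | h <;> simp [h]

theorem IsLineGraph.exists_isLinePartition {V : Type} {G : SimpleGraph V} (hG : IsLineGraph G) :
    ∃ P : Set (Set V), IsLinePartition G P := by
  obtain ⟨W, H, ⟨f⟩⟩ := hG
  exact ⟨_, IsLinePartition.comap f (isLinePartition_lineGraph H)⟩

section KrauszGraph

variable {V : Type} {G : SimpleGraph V} {P : Set (Set V)}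

def cliquesAt (P : Set (Set V)) (u : V) : Set (Set V) := {C | C ∈ P ∧ u ∈ C}

theorem IsLinePartition.encard_cliquesAt_le_two (hP : IsLinePartition G P) (u : V) :
    (cliquesAt P u).encard ≤ 2 := by
  by_contra! h
  obtain ⟨t, hts, ht⟩ := Set.exists_subset_encard_eq (Order.add_one_le_of_lt h)
  obtain ⟨C, D, E, hCD, hCE, hDE, rfl⟩ := Set.encard_eq_three.mp ht
  simp only [Set.insert_subset_iff, Set.singleton_subset_iff] at hts
  obtain ⟨⟨hC, huC⟩, ⟨hD, huD⟩, ⟨hE, huE⟩⟩ := hts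
  rcases hP.2.2 u C hC D hD E hE huC huD huE with h | h | h <;> contradiction

/-- The ends of the edge of the Krausz graph representing `u`: the cliques through `u`, padded by
the private vertices `(u, i)` with `i ≥ #(cliques through u)`, so that there are exactly two. -/
def krauszIncident (P : Set (Set V)) (u : V) : Set V ⊕ V × Fin 2 → Prop
  | .inl C => C ∈ cliquesAt P u
  | .inr (v, i) => v = u ∧ (cliquesAt P u).encard ≤ i

def krauszGraph (P : Set (Set V)) : SimpleGraph (Set V ⊕ V × Fin 2) where
  Adj x y := x ≠ y ∧ ∃ u, krauszIncident P u x ∧ krauszIncident P u y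
  symm := ⟨fun _ _ ⟨hne, u, hx, hy⟩ => ⟨hne.symm, u, hy, hx⟩⟩
  loopless := ⟨fun _ h => h.1 rfl⟩

theorem exists_krauszIncident_iff {u : V} (hu : (cliquesAt P u).encard ≤ 2) :
    ∃ x y, x ≠ y ∧ ∀ z, krauszIncident P u z ↔ z = x ∨ z = y := by
  have hcases : (cliquesAt P u).encard = 0 ∨ (cliquesAt P u).encard = 1 ∨
      (cliquesAt P u).encard = 2 := by
    generalize (cliquesAt P u).encard = n at hu ⊢
    lift n to ℕ using (hu.trans_lt (by decide)).ne
    norm_cast at hu ⊢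
    omega
  rcases hcases with h | h | h
  · refine ⟨.inr (u, 0), .inr (u, 1), by simp, ?_⟩
    rintro (C | ⟨v, i⟩)
    · simp [krauszIncident, Set.encard_eq_zero.mp h]
    · fin_cases i <;> simp [krauszIncident, h]
  · obtain ⟨C, hC⟩ := Set.encard_eq_one.mp h
    refine ⟨.inl C, .inr (u, 1), by simp, ?_⟩
    rintro (D | ⟨v, i⟩)
    · simp [krauszIncident, hC]
    · fin_cases i <;> simp [krauszIncident, h]
  · obtain ⟨C, D, hCD, hCD'⟩ := Set.encard_eq_two.mp h
    refine ⟨.inl C, .inl D, by simpa using hCD, ?_⟩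
    rintro (E | ⟨v, i⟩)
    · simp [krauszIncident, hCD']
    · fin_cases i <;> simp [krauszIncident, h]

theorem exists_mem_edgeSet_krauszGraph {u : V} (hu : (cliquesAt P u).encard ≤ 2) :
    ∃ e ∈ (krauszGraph P).edgeSet, ∀ z, z ∈ e ↔ krauszIncident P u z := by
  obtain ⟨x, y, hne, hxy⟩ := exists_krauszIncident_iff hu
  exact ⟨s(x, y), ⟨hne, u, (hxy x).2 (.inl rfl), (hxy y).2 (.inr rfl)⟩,
    fun z => by rw [Sym2.mem_iff, hxy]⟩

noncomputable def krauszEdge (hP : IsLinePartition G P) (u : V) : (krauszGraph P).edgeSet :=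
  ⟨_, (exists_mem_edgeSet_krauszGraph (hP.encard_cliquesAt_le_two u)).choose_spec.1⟩

theorem mem_krauszEdge_iff (hP : IsLinePartition G P) {u : V} {z : Set V ⊕ V × Fin 2} :
    z ∈ (krauszEdge hP u : Sym2 _) ↔ krauszIncident P u z :=
  (exists_mem_edgeSet_krauszGraph (hP.encard_cliquesAt_le_two u)).choose_spec.2 z

theorem exists_eq_inl_of_krauszIncident {u v : V} {z : Set V ⊕ V × Fin 2}
    (hu : krauszIncident P u z) (hv : krauszIncident P v z) (huv : u ≠ v) :
    ∃ C ∈ P, z = .inl C ∧ u ∈ C ∧ v ∈ C := by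
  rcases z with C | ⟨w, i⟩
  · exact ⟨C, hu.1, rfl, hu.2, hv.2⟩
  · exact absurd (hu.1.symm.trans hv.1) huv

theorem krauszEdge_injective (hP : IsLinePartition G P) : Function.Injective (krauszEdge hP) := by
  intro u v huv
  by_contra hne
  obtain ⟨x, y, hxy, hends⟩ := exists_krauszIncident_iff (hP.encard_cliquesAt_le_two u)
  have hv : ∀ z, krauszIncident P u z → krauszIncident P v z := fun z hz => by
    rwa [← mem_krauszEdge_iff hP, ← huv, mem_krauszEdge_iff hP]
  have hx := (hends x).2 (.inl rfl)
  have hy := (hends y).2 (.inr rfl)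
  obtain ⟨C, hC, rfl, huC, hvC⟩ := exists_eq_inl_of_krauszIncident hx (hv _ hx) hne
  obtain ⟨D, hD, rfl, huD, hvD⟩ := exists_eq_inl_of_krauszIncident hy (hv _ hy) hne
  obtain ⟨_, _, hunique⟩ := hP.2.1 u v (hP.1 C hC huC hvC hne)
  exact hxy (congrArg Sum.inl ((hunique C ⟨hC, huC, hvC⟩).trans (hunique D ⟨hD, huD, hvD⟩).symm))

theorem krauszEdge_surjective (hP : IsLinePartition G P) :
    Function.Surjective (krauszEdge hP) := by
  rintro ⟨e, he⟩
  induction e using Sym2.ind with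
  | _ x y =>
    obtain ⟨hne, u, hx, hy⟩ := he
    exact ⟨u, Subtype.ext ((Sym2.mem_and_mem_iff hne).mp
      ⟨(mem_krauszEdge_iff hP).2 hx, (mem_krauszEdge_iff hP).2 hy⟩)⟩

theorem lineGraph_krauszGraph_adj_iff (hP : IsLinePartition G P) {u v : V} :
    (krauszGraph P).lineGraph.Adj (krauszEdge hP u) (krauszEdge hP v) ↔ G.Adj u v := by
  simp only [lineGraph_adj_iff_exists, mem_krauszEdge_iff hP]
  constructor
  · rintro ⟨hne, z, hu, hv⟩
    have huv : u ≠ v := fun h => hne (h ▸ rfl)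
    obtain ⟨C, hC, -, huC, hvC⟩ := exists_eq_inl_of_krauszIncident hu hv huv
    exact hP.1 C hC huC hvC huv
  · intro huv
    obtain ⟨C, ⟨hC, huC, hvC⟩, -⟩ := hP.2.1 u v huv
    exact ⟨(krauszEdge_injective hP).ne huv.ne, .inl C, ⟨hC, huC⟩, ⟨hC, hvC⟩⟩

noncomputable def krauszIso (hP : IsLinePartition G P) : G ≃g (krauszGraph P).lineGraph where
  toEquiv := .ofBijective _ ⟨krauszEdge_injective hP, krauszEdge_surjective hP⟩
  map_rel_iff' := lineGraph_krauszGraph_adj_iff hP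

theorem IsLinePartition.isLineGraph (hP : IsLinePartition G P) : IsLineGraph G :=
  ⟨_, _, ⟨krauszIso hP⟩⟩

end KrauszGraph

/-- Krausz's characterization of line graphs. -/
theorem krausz_characterization {V : Type} (G : SimpleGraph V) :
    IsLineGraph G ↔ ∃ P : Set (Set V), IsLinePartition G P :=
  ⟨IsLineGraph.exists_isLinePartition, fun ⟨_, hP⟩ => hP.isLineGraph⟩
end

section
/- If G is a connected line graph not isomorphic to any of K_3, L(K_{1,3}+e), L(L(K_{1,3}+e)), L(K_4), and T is an even induced triangle in G with G = L(H), then the three edges of H corresponding to the vertices of T form a triangle in H (not a star). -/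
open SimpleGraph

lemma lineGraph_push {U W : Type} (X : SimpleGraph U) (H : SimpleGraph W)
    (φ : U → W) (hinj : Function.Injective φ)
    (hedge : ∀ s : Sym2 W, s ∈ H.edgeSet ↔ ∃ t ∈ X.edgeSet, Sym2.map φ t = s) :
    Nonempty (H.lineGraph ≃g X.lineGraph) := by
  have hmap : ∀ t : X.edgeSet, Sym2.map φ (t : Sym2 U) ∈ H.edgeSet := fun t =>
    (hedge _).2 ⟨t, t.2, rfl⟩
  have hbij : Function.Bijective (fun t : X.edgeSet => (⟨Sym2.map φ t, hmap t⟩ : H.edgeSet)) := by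
    constructor
    · intro a b hab
      have := congrArg Subtype.val hab
      exact Subtype.ext (Sym2.map.injective hinj this)
    · rintro ⟨s, hs⟩
      obtain ⟨t, ht, rfl⟩ := (hedge s).1 hs
      exact ⟨⟨t, ht⟩, rfl⟩
  refine ⟨(RelIso.mk (Equiv.ofBijective _ hbij) ?_).symm⟩
  intro a b
  show H.lineGraph.Adj ⟨Sym2.map φ a, _⟩ ⟨Sym2.map φ b, _⟩ ↔ X.lineGraph.Adj a b
  rw [lineGraph_adj_iff_exists, lineGraph_adj_iff_exists]
  constructor
  · rintro ⟨hne, v, hv1, hv2⟩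
    simp only [Sym2.mem_map] at hv1 hv2
    obtain ⟨u1, hu1, rfl⟩ := hv1
    obtain ⟨u2, hu2, he⟩ := hv2
    refine ⟨?_, u1, hu1, ?_⟩
    · intro h; exact hne (congrArg (fun t : X.edgeSet => (⟨Sym2.map φ t, hmap t⟩ : H.edgeSet)) h)
    · have : u2 = u1 := hinj he
      subst this; exact hu2
  · rintro ⟨hne, v, hv1, hv2⟩
    refine ⟨?_, φ v, Sym2.mem_map.2 ⟨v, hv1, rfl⟩, Sym2.mem_map.2 ⟨v, hv2, rfl⟩⟩
    intro h
    apply hne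
    apply Subtype.ext
    exact Sym2.map.injective hinj (congrArg Subtype.val h)

lemma star_or_triangle {W : Type} (s₁ s₂ s₃ : Sym2 W)
    (h1 : ¬s₁.IsDiag) (h2 : ¬s₂.IsDiag) (h3 : ¬s₃.IsDiag)
    (d12 : s₁ ≠ s₂) (d13 : s₁ ≠ s₃) (d23 : s₂ ≠ s₃)
    (m12 : ∃ v, v ∈ s₁ ∧ v ∈ s₂) (m13 : ∃ v, v ∈ s₁ ∧ v ∈ s₃)
    (m23 : ∃ v, v ∈ s₂ ∧ v ∈ s₃) :
    (∃ x y z, x ≠ y ∧ x ≠ z ∧ y ≠ z ∧ s₁ = s(x,y) ∧ s₂ = s(y,z) ∧ s₃ = s(x,z)) ∨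
    (∃ v x y z, v ≠ x ∧ v ≠ y ∧ v ≠ z ∧ x ≠ y ∧ x ≠ z ∧ y ≠ z ∧
      s₁ = s(v,x) ∧ s₂ = s(v,y) ∧ s₃ = s(v,z)) := by
  obtain ⟨p, hp1, hp2⟩ := m12
  obtain ⟨b, hs1⟩ : ∃ b, s₁ = s(p, b) := ⟨_, (Sym2.other_spec hp1).symm⟩
  obtain ⟨c, hs2⟩ : ∃ c, s₂ = s(p, c) := ⟨_, (Sym2.other_spec hp2).symm⟩
  have hpb : p ≠ b := fun h => h1 (by rw [hs1, Sym2.mk_isDiag_iff]; exact h)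
  have hpc : p ≠ c := fun h => h2 (by rw [hs2, Sym2.mk_isDiag_iff]; exact h)
  have hbc : b ≠ c := fun h => d12 (by rw [hs1, hs2, h])
  obtain ⟨q, hq1, hq3⟩ := m13
  rw [hs1, Sym2.mem_iff] at hq1
  obtain ⟨d, hs3⟩ : ∃ d, s₃ = s(q, d) := ⟨_, (Sym2.other_spec hq3).symm⟩
  have hqd : q ≠ d := fun h => h3 (by rw [hs3, Sym2.mk_isDiag_iff]; exact h)
  rcases hq1 with hq | hq
  · -- star with center p
    right
    have hs3' : s₃ = s(p, d) := by rw [hs3, hq]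
    have hpd : p ≠ d := hq ▸ hqd
    have hdb : d ≠ b := fun h => d13 (by rw [hs1, hs3', h])
    have hdc : d ≠ c := fun h => d23 (by rw [hs2, hs3', h])
    exact ⟨p, b, c, d, hpb, hpc, hpd, hbc, fun h => hdb h.symm, fun h => hdc h.symm,
      hs1, hs2, hs3'⟩
  · -- s₃ contains b
    left
    have hs3' : s₃ = s(b, d) := by rw [hs3, hq]
    have hbd : b ≠ d := hq ▸ hqd
    have hpd : p ≠ d := by
      intro h
      subst h
      exact d13 (by rw [hs1, hs3', Sym2.eq_swap])
    obtain ⟨r, hr2, hr3⟩ := m23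
    rw [hs2, Sym2.mem_iff] at hr2
    rw [hs3', Sym2.mem_iff] at hr3
    have hdc : d = c := by
      rcases hr2 with h | h <;> rcases hr3 with h' | h'
      · exact absurd (h ▸ h' : p = b) hpb
      · exact absurd (h ▸ h' : p = d) hpd
      · exact absurd (h ▸ h' : c = b) (fun hh => hbc hh.symm)
      · exact (h ▸ h' : c = d).symm
    exact ⟨b, p, c, fun h => hpb h.symm, hbc, hpc,
      by rw [hs1, Sym2.eq_swap], hs2, by rw [hs3', hdc]⟩

lemma leaf_edges {W : Type} (Hgr : SimpleGraph W) (e₁ e₂ e₃ : Hgr.edgeSet)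
    (heven : ∀ f : Hgr.edgeSet,
      (Hgr.lineGraph.Adj f e₁ ∨ Hgr.lineGraph.Adj f e₂ ∨ Hgr.lineGraph.Adj f e₃) →
      (({e₁, e₂, e₃} : Set Hgr.edgeSet) ∩ {x | Hgr.lineGraph.Adj f x}).ncard = 2)
    (v x y z : W) (hxy : x ≠ y) (hxz : x ≠ z)
    (hs1 : (e₁ : Sym2 W) = s(v,x)) (hs2 : (e₂ : Sym2 W) = s(v,y))
    (hs3 : (e₃ : Sym2 W) = s(v,z))
    (f : Hgr.edgeSet) (hxf : x ∈ (f : Sym2 W)) (hvf : v ∉ (f : Sym2 W)) :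
    (f : Sym2 W) = s(x,y) ∨ (f : Sym2 W) = s(x,z) := by
  have hne1 : f ≠ e₁ := fun h => hvf (by rw [h, hs1]; exact Sym2.mem_mk_left _ _)
  have adj1 : Hgr.lineGraph.Adj f e₁ := lineGraph_adj_iff_exists.2
    ⟨hne1, x, hxf, by rw [hs1]; exact Sym2.mem_mk_right _ _⟩
  have h2 := heven f (Or.inl adj1)
  have hor : Hgr.lineGraph.Adj f e₂ ∨ Hgr.lineGraph.Adj f e₃ := by
    by_contra hcon
    push_neg at hcon
    have hset : ({e₁, e₂, e₃} : Set Hgr.edgeSet) ∩ {x | Hgr.lineGraph.Adj f x} = {e₁} := by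
      ext e
      simp only [Set.mem_inter_iff, Set.mem_insert_iff, Set.mem_singleton_iff,
        Set.mem_setOf_eq]
      constructor
      · rintro ⟨(rfl | rfl | rfl), ha⟩
        · rfl
        · exact absurd ha hcon.1
        · exact absurd ha hcon.2
      · rintro rfl; exact ⟨Or.inl rfl, adj1⟩
    rw [hset, Set.ncard_singleton] at h2
    norm_num at h2
  rcases hor with hadj | hadj
  · left
    obtain ⟨-, u, huf, hue⟩ := lineGraph_adj_iff_exists.1 hadj
    rw [hs2, Sym2.mem_iff] at hue
    rcases hue with rfl | rfl
    · exact absurd huf hvf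
    · exact (Sym2.mem_and_mem_iff hxy).1 ⟨hxf, huf⟩
  · right
    obtain ⟨-, u, huf, hue⟩ := lineGraph_adj_iff_exists.1 hadj
    rw [hs3, Sym2.mem_iff] at hue
    rcases hue with rfl | rfl
    · exact absurd huf hvf
    · exact (Sym2.mem_and_mem_iff hxz).1 ⟨hxf, huf⟩

lemma case_K3 {W : Type} (Hgr : SimpleGraph W) (v x y z : W)
    (hvx : v ≠ x) (hvy : v ≠ y) (hvz : v ≠ z) (hxy : x ≠ y) (hxz : x ≠ z) (hyz : y ≠ z)
    (m1 : s(v,x) ∈ Hgr.edgeSet) (m2 : s(v,y) ∈ Hgr.edgeSet) (m3 : s(v,z) ∈ Hgr.edgeSet)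
    (hall : ∀ s ∈ Hgr.edgeSet, s = s(v,x) ∨ s = s(v,y) ∨ s = s(v,z)) :
    Nonempty (Hgr.lineGraph ≃g K3) := by
  have hvmem : ∀ e : Hgr.edgeSet, v ∈ (e : Sym2 W) := by
    intro e
    rcases hall e e.2 with h | h | h <;> rw [h] <;> exact Sym2.mem_mk_left _ _
  let f : Fin 3 → Hgr.edgeSet := ![⟨_, m1⟩, ⟨_, m2⟩, ⟨_, m3⟩]
  have hbij : Function.Bijective f := by
    constructor
    · intro a b hab
      fin_cases a <;> fin_cases b <;> simp_all [f, Subtype.ext_iff, Sym2.eq_iff] <;> tauto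
    · rintro ⟨s, hs⟩
      rcases hall s hs with h | h | h
      · exact ⟨0, by simp [f, h.symm]⟩
      · exact ⟨1, by simp [f, h.symm]⟩
      · exact ⟨2, by simp [f, h.symm]⟩
  refine ⟨RelIso.mk (Equiv.ofBijective f hbij).symm ?_⟩
  intro a b
  show (⊤ : SimpleGraph (Fin 3)).Adj _ _ ↔ _
  rw [top_adj]
  constructor
  · intro h
    refine lineGraph_adj_iff_exists.2 ⟨?_, v, hvmem a, hvmem b⟩
    intro hab; exact h (by rw [hab])
  · intro h
    intro hab
    exact h.ne ((Equiv.ofBijective f hbij).symm.injective hab)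

instance pawAdjDec : DecidableRel paw.Adj := fun a b =>
  decidable_of_iff (a ≠ b ∧ ((a.val, b.val) ∈ [(0,1),(0,2),(0,3),(1,2)] ∨ (b.val, a.val) ∈ [(0,1),(0,2),(0,3),(1,2)]))
    (by rw [paw, graphOfList, SimpleGraph.fromRel_adj])

lemma case_paw {W : Type} (Hgr : SimpleGraph W) (v x y z : W)
    (hvx : v ≠ x) (hvy : v ≠ y) (hvz : v ≠ z) (hxy : x ≠ y) (hxz : x ≠ z) (hyz : y ≠ z)
    (m1 : s(v,x) ∈ Hgr.edgeSet) (m2 : s(v,y) ∈ Hgr.edgeSet) (m3 : s(v,z) ∈ Hgr.edgeSet)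
    (m4 : s(x,y) ∈ Hgr.edgeSet)
    (hall : ∀ s ∈ Hgr.edgeSet, s = s(v,x) ∨ s = s(v,y) ∨ s = s(v,z) ∨ s = s(x,y)) :
    Nonempty (Hgr.lineGraph ≃g paw.lineGraph) := by
  apply lineGraph_push paw Hgr ![v,x,y,z]
  · intro a b hab
    fin_cases a <;> fin_cases b <;> simp_all <;> tauto
  · intro s
    constructor
    · intro hs
      rcases hall s hs with h | h | h | h
      · exact ⟨s(0,1), by decide, by rw [Sym2.map_pair_eq, h]; rfl⟩
      · exact ⟨s(0,2), by decide, by rw [Sym2.map_pair_eq, h]; rfl⟩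
      · exact ⟨s(0,3), by decide, by rw [Sym2.map_pair_eq, h]; rfl⟩
      · exact ⟨s(1,2), by decide, by rw [Sym2.map_pair_eq, h]; rfl⟩
    · rintro ⟨t, ht, rfl⟩
      have : t = s(0,1) ∨ t = s(0,2) ∨ t = s(0,3) ∨ t = s(1,2) := by revert ht; revert t; decide
      rcases this with rfl | rfl | rfl | rfl <;> rw [Sym2.map_pair_eq] <;>
        [exact m1; exact m2; exact m3; exact m4]

instance K4AdjDec : DecidableRel K4.Adj := fun a b =>
  decidable_of_iff (a ≠ b) Iff.rfl

lemma case_K4 {W : Type} (Hgr : SimpleGraph W) (v x y z : W)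
    (hvx : v ≠ x) (hvy : v ≠ y) (hvz : v ≠ z) (hxy : x ≠ y) (hxz : x ≠ z) (hyz : y ≠ z)
    (m1 : s(v,x) ∈ Hgr.edgeSet) (m2 : s(v,y) ∈ Hgr.edgeSet) (m3 : s(v,z) ∈ Hgr.edgeSet)
    (m4 : s(x,y) ∈ Hgr.edgeSet) (m5 : s(x,z) ∈ Hgr.edgeSet) (m6 : s(y,z) ∈ Hgr.edgeSet)
    (hall : ∀ s ∈ Hgr.edgeSet, s = s(v,x) ∨ s = s(v,y) ∨ s = s(v,z) ∨ s = s(x,y) ∨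
      s = s(x,z) ∨ s = s(y,z)) :
    Nonempty (Hgr.lineGraph ≃g K4.lineGraph) := by
  apply lineGraph_push K4 Hgr ![v,x,y,z]
  · intro a b hab
    fin_cases a <;> fin_cases b <;> simp_all <;> tauto
  · intro s
    constructor
    · intro hs
      rcases hall s hs with h | h | h | h | h | h
      · exact ⟨s(0,1), by decide, by rw [Sym2.map_pair_eq, h]; rfl⟩
      · exact ⟨s(0,2), by decide, by rw [Sym2.map_pair_eq, h]; rfl⟩
      · exact ⟨s(0,3), by decide, by rw [Sym2.map_pair_eq, h]; rfl⟩
      · exact ⟨s(1,2), by decide, by rw [Sym2.map_pair_eq, h]; rfl⟩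
      · exact ⟨s(1,3), by decide, by rw [Sym2.map_pair_eq, h]; rfl⟩
      · exact ⟨s(2,3), by decide, by rw [Sym2.map_pair_eq, h]; rfl⟩
    · rintro ⟨t, ht, rfl⟩
      have : t = s(0,1) ∨ t = s(0,2) ∨ t = s(0,3) ∨ t = s(1,2) ∨ t = s(1,3) ∨ t = s(2,3) := by
        revert ht; revert t; decide
      rcases this with rfl | rfl | rfl | rfl | rfl | rfl <;> rw [Sym2.map_pair_eq] <;>
        [exact m1; exact m2; exact m3; exact m4; exact m5; exact m6]

instance pawLineAdjDec : DecidableRel paw.lineGraph.Adj := fun _ _ =>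
  decidable_of_iff _ lineGraph_adj_iff_exists.symm

def pA : paw.edgeSet := ⟨s(0,1), by decide⟩
def pB : paw.edgeSet := ⟨s(0,2), by decide⟩
def pC : paw.edgeSet := ⟨s(0,3), by decide⟩
def pD : paw.edgeSet := ⟨s(1,2), by decide⟩

lemma paw_edge_cases : ∀ e : paw.edgeSet, e = pA ∨ e = pB ∨ e = pC ∨ e = pD := by decide

lemma case_diamond {W : Type} (Hgr : SimpleGraph W) (v x y z : W)
    (hvx : v ≠ x) (hvy : v ≠ y) (hvz : v ≠ z) (hxy : x ≠ y) (hxz : x ≠ z) (hyz : y ≠ z)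
    (m1 : s(v,x) ∈ Hgr.edgeSet) (m2 : s(v,y) ∈ Hgr.edgeSet) (m3 : s(v,z) ∈ Hgr.edgeSet)
    (m4 : s(x,y) ∈ Hgr.edgeSet) (m5 : s(x,z) ∈ Hgr.edgeSet)
    (hall : ∀ s ∈ Hgr.edgeSet, s = s(v,x) ∨ s = s(v,y) ∨ s = s(v,z) ∨ s = s(x,y) ∨ s = s(x,z)) :
    Nonempty (Hgr.lineGraph ≃g paw.lineGraph.lineGraph) := by
  -- pA ↦ v, pB ↦ x, pC ↦ y, pD ↦ z
  let φ : paw.edgeSet → W := fun e => if e = pA then v else if e = pB then x else if e = pC then y else z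
  have φA : φ pA = v := by
    show (if pA = pA then v else if pA = pB then x else if pA = pC then y else z) = v
    rw [if_pos rfl]
  have φB : φ pB = x := by
    show (if pB = pA then v else if pB = pB then x else if pB = pC then y else z) = x
    rw [if_neg (show ¬pB = pA by decide), if_pos rfl]
  have φC : φ pC = y := by
    show (if pC = pA then v else if pC = pB then x else if pC = pC then y else z) = y
    rw [if_neg (show ¬pC = pA by decide), if_neg (show ¬pC = pB by decide), if_pos rfl]
  have φD : φ pD = z := by
    show (if pD = pA then v else if pD = pB then x else if pD = pC then y else z) = z
    rw [if_neg (show ¬pD = pA by decide), if_neg (show ¬pD = pB by decide),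
      if_neg (show ¬pD = pC by decide)]
  apply lineGraph_push paw.lineGraph Hgr φ
  · intro a b hab
    rcases paw_edge_cases a with rfl | rfl | rfl | rfl <;>
      rcases paw_edge_cases b with rfl | rfl | rfl | rfl <;>
      simp_all [φA, φB, φC, φD] <;> tauto
  · intro s
    constructor
    · intro hs
      rcases hall s hs with h | h | h | h | h
      · exact ⟨s(pA,pB), by decide, by rw [Sym2.map_pair_eq, φA, φB, h]⟩
      · exact ⟨s(pA,pC), by decide, by rw [Sym2.map_pair_eq, φA, φC, h]⟩
      · exact ⟨s(pA,pD), by decide, by rw [Sym2.map_pair_eq, φA, φD, h]⟩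
      · exact ⟨s(pB,pC), by decide, by rw [Sym2.map_pair_eq, φB, φC, h]⟩
      · exact ⟨s(pB,pD), by decide, by rw [Sym2.map_pair_eq, φB, φD, h]⟩
    · rintro ⟨t, ht, rfl⟩
      have : t = s(pA,pB) ∨ t = s(pA,pC) ∨ t = s(pA,pD) ∨ t = s(pB,pC) ∨ t = s(pB,pD) := by
        revert ht; revert t; decide
      rcases this with rfl | rfl | rfl | rfl | rfl <;> rw [Sym2.map_pair_eq] <;>
        simp only [φA, φB, φC, φD] <;> [exact m1; exact m2; exact m3; exact m4; exact m5]

set_option maxHeartbeats 1000000 in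
/-- For a connected line graph `G = L(H)` not isomorphic to `K₃`, `L(K_{1,3}+e)`,
`L(L(K_{1,3}+e))` or `L(K₄)`, the edges of `H` corresponding to an even triangle of
`G` form a triangle of `H`. -/
theorem even_triangle_preimage {W : Type} (Hgr : SimpleGraph W)
    (hconn : Hgr.lineGraph.Connected)
    (hK3 : ¬ Nonempty (Hgr.lineGraph ≃g K3))
    (hE1 : ¬ Nonempty (Hgr.lineGraph ≃g paw.lineGraph))
    (hE2 : ¬ Nonempty (Hgr.lineGraph ≃g paw.lineGraph.lineGraph))
    (hE3 : ¬ Nonempty (Hgr.lineGraph ≃g K4.lineGraph))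
    (e₁ e₂ e₃ : Hgr.edgeSet)
    (ht : IsEvenTriangle Hgr.lineGraph e₁ e₂ e₃) :
    ∃ x y z : W, x ≠ y ∧ x ≠ z ∧ y ≠ z ∧
      (e₁ : Sym2 W) = s(x, y) ∧ (e₂ : Sym2 W) = s(y, z) ∧ (e₃ : Sym2 W) = s(x, z) := by
  obtain ⟨⟨a12, a13, a23⟩, heven⟩ := ht
  obtain ⟨d12, m12⟩ := lineGraph_adj_iff_exists.1 a12
  obtain ⟨d13, m13⟩ := lineGraph_adj_iff_exists.1 a13
  obtain ⟨d23, m23⟩ := lineGraph_adj_iff_exists.1 a23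
  rcases star_or_triangle (e₁ : Sym2 W) (e₂ : Sym2 W) (e₃ : Sym2 W)
    (Hgr.not_isDiag_of_mem_edgeSet e₁.2) (Hgr.not_isDiag_of_mem_edgeSet e₂.2)
    (Hgr.not_isDiag_of_mem_edgeSet e₃.2)
    (fun h => d12 (Subtype.ext h)) (fun h => d13 (Subtype.ext h))
    (fun h => d23 (Subtype.ext h)) m12 m13 m23 with h | h
  · obtain ⟨x, y, z, hxy, hxz, hyz, h1, h2, h3⟩ := h
    exact ⟨x, y, z, hxy, hxz, hyz, h1, h2, h3⟩
  exfalso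
  obtain ⟨v, x, y, z, hvx, hvy, hvz, hxy, hxz, hyz, hs1, hs2, hs3⟩ := h
  -- Step A: every edge through v is one of the three
  have stepA : ∀ f : Hgr.edgeSet, v ∈ (f : Sym2 W) →
      (f : Sym2 W) = s(v,x) ∨ (f : Sym2 W) = s(v,y) ∨ (f : Sym2 W) = s(v,z) := by
    intro f hvf
    by_contra hcon
    push_neg at hcon
    obtain ⟨n1, n2, n3⟩ := hcon
    have adj1 : Hgr.lineGraph.Adj f e₁ := lineGraph_adj_iff_exists.2
      ⟨fun h => n1 (by rw [h, hs1]), v, hvf, by rw [hs1]; exact Sym2.mem_mk_left _ _⟩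
    have adj2 : Hgr.lineGraph.Adj f e₂ := lineGraph_adj_iff_exists.2
      ⟨fun h => n2 (by rw [h, hs2]), v, hvf, by rw [hs2]; exact Sym2.mem_mk_left _ _⟩
    have adj3 : Hgr.lineGraph.Adj f e₃ := lineGraph_adj_iff_exists.2
      ⟨fun h => n3 (by rw [h, hs3]), v, hvf, by rw [hs3]; exact Sym2.mem_mk_left _ _⟩
    have h2 := heven f (Or.inl adj1)
    have hset : ({e₁, e₂, e₃} : Set Hgr.edgeSet) ∩ {x | Hgr.lineGraph.Adj f x}
        = {e₁, e₂, e₃} := by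
      apply Set.inter_eq_left.mpr
      intro e he
      simp only [Set.mem_insert_iff, Set.mem_singleton_iff] at he
      rcases he with rfl | rfl | rfl
      exacts [adj1, adj2, adj3]
    rw [hset] at h2
    have h3 : ({e₁, e₂, e₃} : Set Hgr.edgeSet).ncard = 3 :=
      Set.ncard_eq_three.2 ⟨e₁, e₂, e₃, d12, d13, d23, rfl⟩
    rw [h3] at h2
    norm_num at h2
  -- permuted evenness
  have heven₂ : ∀ f : Hgr.edgeSet,
      (Hgr.lineGraph.Adj f e₂ ∨ Hgr.lineGraph.Adj f e₁ ∨ Hgr.lineGraph.Adj f e₃) →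
      (({e₂, e₁, e₃} : Set Hgr.edgeSet) ∩ {x | Hgr.lineGraph.Adj f x}).ncard = 2 := by
    intro f hf
    rw [Set.insert_comm]
    exact heven f (by tauto)
  have heven₃ : ∀ f : Hgr.edgeSet,
      (Hgr.lineGraph.Adj f e₃ ∨ Hgr.lineGraph.Adj f e₁ ∨ Hgr.lineGraph.Adj f e₂) →
      (({e₃, e₁, e₂} : Set Hgr.edgeSet) ∩ {x | Hgr.lineGraph.Adj f x}).ncard = 2 := by
    intro f hf
    rw [Set.insert_comm, Set.pair_comm e₃ e₂]
    exact heven f (by tauto)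
  -- Step B/C: every edge of H is among the six candidates
  have step : ∀ f g : Hgr.edgeSet,
      ((f : Sym2 W) = s(v,x) ∨ (f : Sym2 W) = s(v,y) ∨ (f : Sym2 W) = s(v,z) ∨
       (f : Sym2 W) = s(x,y) ∨ (f : Sym2 W) = s(x,z) ∨ (f : Sym2 W) = s(y,z)) →
      Hgr.lineGraph.Adj f g →
      ((g : Sym2 W) = s(v,x) ∨ (g : Sym2 W) = s(v,y) ∨ (g : Sym2 W) = s(v,z) ∨
       (g : Sym2 W) = s(x,y) ∨ (g : Sym2 W) = s(x,z) ∨ (g : Sym2 W) = s(y,z)) := by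
    intro f g hf hadj
    obtain ⟨-, u, huf, hug⟩ := lineGraph_adj_iff_exists.1 hadj
    have hu4 : u = v ∨ u = x ∨ u = y ∨ u = z := by
      rcases hf with h | h | h | h | h | h <;> rw [h, Sym2.mem_iff] at huf <;> tauto
    rcases hu4 with rfl | rfl | rfl | rfl
    · rcases stepA g hug with h | h | h
      exacts [Or.inl h, Or.inr (Or.inl h), Or.inr (Or.inr (Or.inl h))]
    · by_cases hv : v ∈ (g : Sym2 W)
      · rcases stepA g hv with h | h | h
        exacts [Or.inl h, Or.inr (Or.inl h), Or.inr (Or.inr (Or.inl h))]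
      · rcases leaf_edges Hgr e₁ e₂ e₃ heven v u y z hxy hxz hs1 hs2 hs3 g hug hv
          with h | h
        exacts [Or.inr (Or.inr (Or.inr (Or.inl h))), Or.inr (Or.inr (Or.inr (Or.inr (Or.inl h))))]
    · by_cases hv : v ∈ (g : Sym2 W)
      · rcases stepA g hv with h | h | h
        exacts [Or.inl h, Or.inr (Or.inl h), Or.inr (Or.inr (Or.inl h))]
      · rcases leaf_edges Hgr e₂ e₁ e₃ heven₂ v u x z (fun h => hxy h.symm) hyz
            hs2 hs1 hs3 g hug hv with h | h
        · rw [Sym2.eq_swap] at h; exact Or.inr (Or.inr (Or.inr (Or.inl h)))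
        · exact Or.inr (Or.inr (Or.inr (Or.inr (Or.inr h))))
    · by_cases hv : v ∈ (g : Sym2 W)
      · rcases stepA g hv with h | h | h
        exacts [Or.inl h, Or.inr (Or.inl h), Or.inr (Or.inr (Or.inl h))]
      · rcases leaf_edges Hgr e₃ e₁ e₂ heven₃ v u x y (fun h => hxz h.symm)
            (fun h => hyz h.symm) hs3 hs1 hs2 g hug hv with h | h
        · rw [Sym2.eq_swap] at h; exact Or.inr (Or.inr (Or.inr (Or.inr (Or.inl h))))
        · rw [Sym2.eq_swap] at h; exact Or.inr (Or.inr (Or.inr (Or.inr (Or.inr h))))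
  have key : ∀ (g f : Hgr.edgeSet), Hgr.lineGraph.Walk g f →
      ((g : Sym2 W) = s(v,x) ∨ (g : Sym2 W) = s(v,y) ∨ (g : Sym2 W) = s(v,z) ∨
       (g : Sym2 W) = s(x,y) ∨ (g : Sym2 W) = s(x,z) ∨ (g : Sym2 W) = s(y,z)) →
      ((f : Sym2 W) = s(v,x) ∨ (f : Sym2 W) = s(v,y) ∨ (f : Sym2 W) = s(v,z) ∨
       (f : Sym2 W) = s(x,y) ∨ (f : Sym2 W) = s(x,z) ∨ (f : Sym2 W) = s(y,z)) := by
    intro g f p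
    induction p with
    | nil => exact id
    | cons h p ih => exact fun hu => ih (step _ _ hu h)
  have stepC : ∀ f : Hgr.edgeSet,
      (f : Sym2 W) = s(v,x) ∨ (f : Sym2 W) = s(v,y) ∨ (f : Sym2 W) = s(v,z) ∨
      (f : Sym2 W) = s(x,y) ∨ (f : Sym2 W) = s(x,z) ∨ (f : Sym2 W) = s(y,z) := by
    intro f
    obtain ⟨p⟩ := hconn.preconnected e₁ f
    exact key e₁ f p (Or.inl hs1)
  have m1 : s(v,x) ∈ Hgr.edgeSet := hs1 ▸ e₁.2
  have m2 : s(v,y) ∈ Hgr.edgeSet := hs2 ▸ e₂.2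
  have m3 : s(v,z) ∈ Hgr.edgeSet := hs3 ▸ e₃.2
  by_cases P1 : s(x,y) ∈ Hgr.edgeSet <;> by_cases P2 : s(x,z) ∈ Hgr.edgeSet <;>
    by_cases P3 : s(y,z) ∈ Hgr.edgeSet
  · -- K4
    refine hE3 (case_K4 Hgr v x y z hvx hvy hvz hxy hxz hyz m1 m2 m3 P1 P2 P3 ?_)
    intro s hs
    exact stepC ⟨s, hs⟩
  · -- diamond xy xz
    refine hE2 (case_diamond Hgr v x y z hvx hvy hvz hxy hxz hyz m1 m2 m3 P1 P2 ?_)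
    intro s hs
    rcases stepC ⟨s, hs⟩ with h | h | h | h | h | h
    exacts [Or.inl h, Or.inr (Or.inl h), Or.inr (Or.inr (Or.inl h)), Or.inr (Or.inr (Or.inr (Or.inl h))), Or.inr (Or.inr (Or.inr (Or.inr h))), absurd (h ▸ hs) P3]
  · -- diamond xy yz : leaf center y
    refine hE2 (case_diamond Hgr v y x z hvy hvx hvz (fun h => hxy h.symm) hyz hxz
      m2 m1 m3 (by rw [Sym2.eq_swap]; exact P1) P3 ?_)
    intro s hs
    rcases stepC ⟨s, hs⟩ with h | h | h | h | h | h
    · exact Or.inr (Or.inl h)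
    · exact Or.inl h
    · exact Or.inr (Or.inr (Or.inl h))
    · rw [Sym2.eq_swap] at h; exact Or.inr (Or.inr (Or.inr (Or.inl h)))
    · exact absurd (h ▸ hs) P2
    · exact Or.inr (Or.inr (Or.inr (Or.inr h)))
  · -- paw xy
    refine hE1 (case_paw Hgr v x y z hvx hvy hvz hxy hxz hyz m1 m2 m3 P1 ?_)
    intro s hs
    rcases stepC ⟨s, hs⟩ with h | h | h | h | h | h
    exacts [Or.inl h, Or.inr (Or.inl h), Or.inr (Or.inr (Or.inl h)),
      Or.inr (Or.inr (Or.inr h)), absurd (h ▸ hs) P2, absurd (h ▸ hs) P3]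
  · -- diamond xz yz : leaf center z
    refine hE2 (case_diamond Hgr v z x y hvz hvx hvy (fun h => hxz h.symm)
      (fun h => hyz h.symm) hxy m3 m1 m2 (by rw [Sym2.eq_swap]; exact P2)
      (by rw [Sym2.eq_swap]; exact P3) ?_)
    intro s hs
    rcases stepC ⟨s, hs⟩ with h | h | h | h | h | h
    · exact Or.inr (Or.inl h)
    · exact Or.inr (Or.inr (Or.inl h))
    · exact Or.inl h
    · exact absurd (h ▸ hs) P1
    · rw [Sym2.eq_swap] at h; exact Or.inr (Or.inr (Or.inr (Or.inl h)))
    · rw [Sym2.eq_swap] at h; exact Or.inr (Or.inr (Or.inr (Or.inr h)))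
  · -- paw xz
    refine hE1 (case_paw Hgr v x z y hvx hvz hvy hxz hxy (fun h => hyz h.symm)
      m1 m3 m2 P2 ?_)
    intro s hs
    rcases stepC ⟨s, hs⟩ with h | h | h | h | h | h
    exacts [Or.inl h, Or.inr (Or.inr (Or.inl h)), Or.inr (Or.inl h), absurd (h ▸ hs) P1, Or.inr (Or.inr (Or.inr h)), absurd (h ▸ hs) P3]
  · -- paw yz
    refine hE1 (case_paw Hgr v y z x hvy hvz hvx hyz (fun h => hxy h.symm)
      (fun h => hxz h.symm) m2 m3 m1 P3 ?_)
    intro s hs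
    rcases stepC ⟨s, hs⟩ with h | h | h | h | h | h
    exacts [Or.inr (Or.inr (Or.inl h)), Or.inl h, Or.inr (Or.inl h), absurd (h ▸ hs) P1, absurd (h ▸ hs) P2, Or.inr (Or.inr (Or.inr h))]
  · -- K3
    refine hK3 (case_K3 Hgr v x y z hvx hvy hvz hxy hxz hyz m1 m2 m3 ?_)
    intro s hs
    rcases stepC ⟨s, hs⟩ with h | h | h | h | h | h
    exacts [Or.inl h, Or.inr (Or.inl h), Or.inr (Or.inr h),
      absurd (h ▸ hs) P1, absurd (h ▸ hs) P2, absurd (h ▸ hs) P3]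
end

section
/- If G is a connected line graph with G = L(H) and T is an odd triangle in G, then the three edges of H corresponding to the vertices of T share a common endpoint (i.e., form a star in H). -/
open SimpleGraph

open SimpleGraph

lemma sym2_repr {α : Type*} (z : Sym2 α) : ∃ a b, z = s(a, b) :=
  Sym2.ind (fun a b => ⟨a, b, rfl⟩) z


set_option maxHeartbeats 1000000 in
lemma no_common {W : Type} {a b c u w : W} (hab : a ≠ b) (hac : a ≠ c) (hbc : b ≠ c)
    (hn1 : s(u, w) ≠ s(a, b)) (hn2 : s(u, w) ≠ s(a, c)) (hn3 : s(u, w) ≠ s(b, c))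
    (m1 : u = a ∨ u = b ∨ w = a ∨ w = b)
    (m2 : u = a ∨ u = c ∨ w = a ∨ w = c)
    (m3 : u = b ∨ u = c ∨ w = b ∨ w = c) : False := by
  simp only [ne_eq, Sym2.eq_iff, not_or, not_and] at hn1 hn2 hn3
  rcases m1 with rfl | rfl | rfl | rfl <;> rcases m2 with h | h | h | h <;>
    rcases m3 with h' | h' | h' | h' <;> subst_vars <;> tauto

lemma line_adj {W : Type} {Hgr : SimpleGraph W} {e f : Hgr.edgeSet} (hne : e ≠ f)
    {x : W} (hx : x ∈ (e : Sym2 W)) (hx' : x ∈ (f : Sym2 W)) : Hgr.lineGraph.Adj e f :=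
  lineGraph_adj_iff_exists.mpr ⟨hne, x, hx, hx'⟩

set_option maxHeartbeats 1000000 in
lemma parity {W : Type} (Hgr : SimpleGraph W) (e₁ e₂ e₃ v : Hgr.edgeSet)
    {a b c : W} (hab : a ≠ b) (hac : a ≠ c) (hbc : b ≠ c)
    (h1 : (e₁ : Sym2 W) = s(a, b)) (h2 : (e₂ : Sym2 W) = s(a, c))
    (h3 : (e₃ : Sym2 W) = s(b, c)) :
    ¬ Odd ((({e₁, e₂, e₃} : Set Hgr.edgeSet) ∩ {x | Hgr.lineGraph.Adj v x}).ncard) := by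
  classical
  have ne12 : e₁ ≠ e₂ := by
    intro h; rw [Subtype.ext_iff, h1, h2, Sym2.eq_iff] at h; tauto
  have ne13 : e₁ ≠ e₃ := by
    intro h; rw [Subtype.ext_iff, h1, h3, Sym2.eq_iff] at h; tauto
  have ne23 : e₂ ≠ e₃ := by
    intro h; rw [Subtype.ext_iff, h2, h3, Sym2.eq_iff] at h; tauto
  have ma1 : a ∈ (e₁ : Sym2 W) := by rw [h1]; simp
  have mb1 : b ∈ (e₁ : Sym2 W) := by rw [h1]; simp
  have ma2 : a ∈ (e₂ : Sym2 W) := by rw [h2]; simp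
  have mc2 : c ∈ (e₂ : Sym2 W) := by rw [h2]; simp
  have mb3 : b ∈ (e₃ : Sym2 W) := by rw [h3]; simp
  have mc3 : c ∈ (e₃ : Sym2 W) := by rw [h3]; simp
  -- claim: not adjacent to all three
  have claimT : ¬ (Hgr.lineGraph.Adj v e₁ ∧ Hgr.lineGraph.Adj v e₂ ∧ Hgr.lineGraph.Adj v e₃) := by
    rintro ⟨A1, A2, A3⟩
    obtain ⟨u, w, hvw⟩ := sym2_repr (v : Sym2 W)
    have huw : u ≠ w := by
      have := v.2; rw [hvw, SimpleGraph.mem_edgeSet] at this; exact this.ne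
    have hn1 : s(u, w) ≠ s(a, b) := by
      rw [← hvw, ← h1]; exact fun h => A1.ne (Subtype.ext h)
    have hn2 : s(u, w) ≠ s(a, c) := by
      rw [← hvw, ← h2]; exact fun h => A2.ne (Subtype.ext h)
    have hn3 : s(u, w) ≠ s(b, c) := by
      rw [← hvw, ← h3]; exact fun h => A3.ne (Subtype.ext h)
    obtain ⟨-, x1, hx1v, hx11⟩ := lineGraph_adj_iff_exists.mp A1
    obtain ⟨-, x2, hx2v, hx22⟩ := lineGraph_adj_iff_exists.mp A2
    obtain ⟨-, x3, hx3v, hx33⟩ := lineGraph_adj_iff_exists.mp A3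
    rw [hvw, Sym2.mem_iff] at hx1v hx2v hx3v
    rw [h1, Sym2.mem_iff] at hx11
    rw [h2, Sym2.mem_iff] at hx22
    rw [h3, Sym2.mem_iff] at hx33
    have m1 : u = a ∨ u = b ∨ w = a ∨ w = b := by
      rcases hx1v with rfl | rfl
      · exact hx11.elim Or.inl (fun h => Or.inr (Or.inl h))
      · exact hx11.elim (fun h => Or.inr (Or.inr (Or.inl h)))
          (fun h => Or.inr (Or.inr (Or.inr h)))
    have m2 : u = a ∨ u = c ∨ w = a ∨ w = c := by
      rcases hx2v with rfl | rfl
      · exact hx22.elim Or.inl (fun h => Or.inr (Or.inl h))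
      · exact hx22.elim (fun h => Or.inr (Or.inr (Or.inl h)))
          (fun h => Or.inr (Or.inr (Or.inr h)))
    have m3 : u = b ∨ u = c ∨ w = b ∨ w = c := by
      rcases hx3v with rfl | rfl
      · exact hx33.elim Or.inl (fun h => Or.inr (Or.inl h))
      · exact hx33.elim (fun h => Or.inr (Or.inr (Or.inl h)))
          (fun h => Or.inr (Or.inr (Or.inr h)))
    exact no_common hab hac hbc hn1 hn2 hn3 m1 m2 m3
  have claim1 : Hgr.lineGraph.Adj v e₁ → Hgr.lineGraph.Adj v e₂ ∨ Hgr.lineGraph.Adj v e₃ := by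
    intro A1
    obtain ⟨-, x, hxv, hx1⟩ := lineGraph_adj_iff_exists.mp A1
    rw [h1, Sym2.mem_iff] at hx1
    rcases hx1 with rfl | rfl
    · by_cases hve : v = e₂
      · exact Or.inr (hve ▸ line_adj ne23 mc2 mc3)
      · exact Or.inl (line_adj hve hxv ma2)
    · by_cases hve : v = e₃
      · exact Or.inl (hve ▸ line_adj ne23.symm mc3 mc2)
      · exact Or.inr (line_adj hve hxv mb3)
  have claim2 : Hgr.lineGraph.Adj v e₂ → Hgr.lineGraph.Adj v e₁ ∨ Hgr.lineGraph.Adj v e₃ := by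
    intro A2
    obtain ⟨-, x, hxv, hx2⟩ := lineGraph_adj_iff_exists.mp A2
    rw [h2, Sym2.mem_iff] at hx2
    rcases hx2 with rfl | rfl
    · by_cases hve : v = e₁
      · exact Or.inr (hve ▸ line_adj ne13 mb1 mb3)
      · exact Or.inl (line_adj hve hxv ma1)
    · by_cases hve : v = e₃
      · exact Or.inl (hve ▸ line_adj ne13.symm mb3 mb1)
      · exact Or.inr (line_adj hve hxv mc3)
  have claim3 : Hgr.lineGraph.Adj v e₃ → Hgr.lineGraph.Adj v e₁ ∨ Hgr.lineGraph.Adj v e₂ := by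
    intro A3
    obtain ⟨-, x, hxv, hx3⟩ := lineGraph_adj_iff_exists.mp A3
    rw [h3, Sym2.mem_iff] at hx3
    rcases hx3 with rfl | rfl
    · by_cases hve : v = e₁
      · exact Or.inr (hve ▸ line_adj ne12 ma1 ma2)
      · exact Or.inl (line_adj hve hxv mb1)
    · by_cases hve : v = e₂
      · exact Or.inl (hve ▸ line_adj ne12.symm ma2 ma1)
      · exact Or.inr (line_adj hve hxv mc2)
  by_cases A1 : Hgr.lineGraph.Adj v e₁ <;> by_cases A2 : Hgr.lineGraph.Adj v e₂ <;>
    by_cases A3 : Hgr.lineGraph.Adj v e₃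
  · exact (claimT ⟨A1, A2, A3⟩).elim
  · have hS : ({e₁, e₂, e₃} : Set Hgr.edgeSet) ∩ {x | Hgr.lineGraph.Adj v x} = {e₁, e₂} := by
      ext y
      simp only [Set.mem_inter_iff, Set.mem_insert_iff, Set.mem_singleton_iff, Set.mem_setOf_eq]
      constructor
      · rintro ⟨rfl | rfl | rfl, h⟩ <;> tauto
      · rintro (rfl | rfl) <;> tauto
    rw [hS, Set.ncard_pair ne12]; decide
  · have hS : ({e₁, e₂, e₃} : Set Hgr.edgeSet) ∩ {x | Hgr.lineGraph.Adj v x} = {e₁, e₃} := by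
      ext y
      simp only [Set.mem_inter_iff, Set.mem_insert_iff, Set.mem_singleton_iff, Set.mem_setOf_eq]
      constructor
      · rintro ⟨rfl | rfl | rfl, h⟩ <;> tauto
      · rintro (rfl | rfl) <;> tauto
    rw [hS, Set.ncard_pair ne13]; decide
  · rcases claim1 A1 with h | h <;> tauto
  · have hS : ({e₁, e₂, e₃} : Set Hgr.edgeSet) ∩ {x | Hgr.lineGraph.Adj v x} = {e₂, e₃} := by
      ext y
      simp only [Set.mem_inter_iff, Set.mem_insert_iff, Set.mem_singleton_iff, Set.mem_setOf_eq]
      constructor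
      · rintro ⟨rfl | rfl | rfl, h⟩ <;> tauto
      · rintro (rfl | rfl) <;> tauto
    rw [hS, Set.ncard_pair ne23]; decide
  · rcases claim2 A2 with h | h <;> tauto
  · rcases claim3 A3 with h | h <;> tauto
  · have hS : ({e₁, e₂, e₃} : Set Hgr.edgeSet) ∩ {x | Hgr.lineGraph.Adj v x} = ∅ := by
      ext y
      simp only [Set.mem_inter_iff, Set.mem_insert_iff, Set.mem_singleton_iff, Set.mem_setOf_eq,
        Set.mem_empty_iff_false, iff_false]
      rintro ⟨rfl | rfl | rfl, h⟩ <;> tauto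
    rw [hS, Set.ncard_empty]; decide


lemma reduce {W : Type} (Hgr : SimpleGraph W) (e₁ e₂ e₃ v : Hgr.edgeSet)
    {a b : W} (h1 : (e₁ : Sym2 W) = s(a, b)) (ha2 : a ∈ (e₂ : Sym2 W))
    (h12 : Hgr.lineGraph.Adj e₁ e₂) (h13 : Hgr.lineGraph.Adj e₁ e₃)
    (h23 : Hgr.lineGraph.Adj e₂ e₃)
    (hodd : Odd ((({e₁, e₂, e₃} : Set Hgr.edgeSet) ∩ {x | Hgr.lineGraph.Adj v x}).ncard)) :
    ∃ x : W, x ∈ (e₁ : Sym2 W) ∧ x ∈ (e₂ : Sym2 W) ∧ x ∈ (e₃ : Sym2 W) := by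
  have hab : a ≠ b := by
    have := e₁.2; rw [h1, SimpleGraph.mem_edgeSet] at this; exact this.ne
  obtain ⟨c, h2⟩ := Sym2.mem_iff_exists.mp ha2
  have hac : a ≠ c := by
    have := e₂.2; rw [h2, SimpleGraph.mem_edgeSet] at this; exact this.ne
  have hbc : b ≠ c := by
    rintro rfl
    exact h12.ne (Subtype.ext (by rw [h1, h2, Sym2.eq_swap]))
  by_cases hc : a ∈ (e₃ : Sym2 W)
  · exact ⟨a, by rw [h1]; simp, ha2, hc⟩
  · obtain ⟨-, x, hx1, hx3⟩ := lineGraph_adj_iff_exists.mp h13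
    rw [h1, Sym2.mem_iff] at hx1
    have hb3 : b ∈ (e₃ : Sym2 W) := by
      rcases hx1 with rfl | rfl
      · exact absurd hx3 hc
      · exact hx3
    obtain ⟨-, y, hy2, hy3⟩ := lineGraph_adj_iff_exists.mp h23
    rw [h2, Sym2.mem_iff] at hy2
    have hc3 : c ∈ (e₃ : Sym2 W) := by
      rcases hy2 with rfl | rfl
      · exact absurd hy3 hc
      · exact hy3
    have h3 : (e₃ : Sym2 W) = s(b, c) := (Sym2.mem_and_mem_iff hbc).mp ⟨hb3, hc3⟩
    exact absurd hodd (parity Hgr e₁ e₂ e₃ v hab hac hbc h1 h2 h3)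


/-- For a connected line graph `G = L(H)`, the edges of `H` corresponding to an odd
triangle of `G` share a common endpoint (form a star). -/
theorem odd_triangle_preimage {W : Type} (Hgr : SimpleGraph W)
    (hconn : Hgr.lineGraph.Connected)
    (e₁ e₂ e₃ : Hgr.edgeSet)
    (ht : IsOddTriangle Hgr.lineGraph e₁ e₂ e₃) :
    ∃ x : W, x ∈ (e₁ : Sym2 W) ∧ x ∈ (e₂ : Sym2 W) ∧ x ∈ (e₃ : Sym2 W) := by
  obtain ⟨⟨h12, h13, h23⟩, v, hv⟩ := ht
  obtain ⟨a, b, h1⟩ := sym2_repr (e₁ : Sym2 W)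
  obtain ⟨-, x, hx1, hx2⟩ := lineGraph_adj_iff_exists.mp h12
  rw [h1, Sym2.mem_iff] at hx1
  rcases hx1 with rfl | rfl
  · exact reduce Hgr e₁ e₂ e₃ v h1 hx2 h12 h13 h23 hv
  · exact reduce Hgr e₁ e₂ e₃ v (h1.trans (Sym2.eq_swap)) hx2 h12 h13 h23 hv
end

section
/- No connected graph with maximum degree 3 is a third-order (or higher) line graph: if Δ(G) = 3 then for all n ≥ 3 there is no graph H with G ≅ Lⁿ(H). -/
open SimpleGraph

/-- `IsIterLineGraph n G` says that `G` is (isomorphic to) an `n`-th iterated line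
graph: `G ≅ Lⁿ(H)` for some graph `H`. -/
def IsIterLineGraph : ℕ → {V : Type} → SimpleGraph V → Prop
  | 0, _, _ => True
  | n + 1, _, G => ∃ (W : Type) (Hgr : SimpleGraph W),
      IsIterLineGraph n Hgr ∧ Nonempty (G ≃g Hgr.lineGraph)


section AuxDefs
variable {V : Type*} {W : Type*}

/-- `v` has at least 3 distinct neighbors. -/
def Nbr3 (G : SimpleGraph V) (v : V) : Prop :=
  ∃ a b c, a ≠ b ∧ a ≠ c ∧ b ≠ c ∧ G.Adj v a ∧ G.Adj v b ∧ G.Adj v c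

/-- `v` has at most 2 neighbors. -/
def NbrLe2 (G : SimpleGraph V) (v : V) : Prop :=
  ∀ a b c, G.Adj v a → G.Adj v b → G.Adj v c → a = b ∨ a = c ∨ b = c

/-- `v` has at most 3 neighbors. -/
def NbrLe3 (G : SimpleGraph V) (v : V) : Prop :=
  ∀ a b c d, G.Adj v a → G.Adj v b → G.Adj v c → G.Adj v d →
    a = b ∨ a = c ∨ a = d ∨ b = c ∨ b = d ∨ c = d

lemma nbr3_map {G : SimpleGraph V} {G' : SimpleGraph W} (f : G ≃g G') {v : V}
    (h : Nbr3 G v) : Nbr3 G' (f v) := by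
  obtain ⟨a, b, c, hab, hac, hbc, h1, h2, h3⟩ := h
  exact ⟨f a, f b, f c, fun h => hab (f.toEquiv.injective h),
    fun h => hac (f.toEquiv.injective h), fun h => hbc (f.toEquiv.injective h),
    f.map_adj_iff.2 h1, f.map_adj_iff.2 h2, f.map_adj_iff.2 h3⟩

lemma adj_symm_of_adj {G : SimpleGraph V} {G' : SimpleGraph W} (f : G ≃g G') {v : V} {x : W}
    (hx : G'.Adj (f v) x) : G.Adj v (f.symm x) := by
  have := f.symm.map_adj_iff.2 hx
  rwa [f.symm_apply_apply] at this

lemma nbrLe2_map {G : SimpleGraph V} {G' : SimpleGraph W} (f : G ≃g G') {v : V}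
    (h : NbrLe2 G v) : NbrLe2 G' (f v) := by
  intro a b c h1 h2 h3
  rcases h _ _ _ (adj_symm_of_adj f h1) (adj_symm_of_adj f h2) (adj_symm_of_adj f h3) with
    h' | h' | h'
  · exact Or.inl (f.symm.toEquiv.injective h')
  · exact Or.inr (Or.inl (f.symm.toEquiv.injective h'))
  · exact Or.inr (Or.inr (f.symm.toEquiv.injective h'))

lemma nbrLe3_map {G : SimpleGraph V} {G' : SimpleGraph W} (f : G ≃g G') {v : V}
    (h : NbrLe3 G v) : NbrLe3 G' (f v) := by
  intro a b c d h1 h2 h3 h4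
  rcases h _ _ _ _ (adj_symm_of_adj f h1) (adj_symm_of_adj f h2) (adj_symm_of_adj f h3)
      (adj_symm_of_adj f h4) with h' | h' | h' | h' | h' | h'
  · exact Or.inl (f.symm.toEquiv.injective h')
  · exact Or.inr (Or.inl (f.symm.toEquiv.injective h'))
  · exact Or.inr (Or.inr (Or.inl (f.symm.toEquiv.injective h')))
  · exact Or.inr (Or.inr (Or.inr (Or.inl (f.symm.toEquiv.injective h'))))
  · exact Or.inr (Or.inr (Or.inr (Or.inr (Or.inl (f.symm.toEquiv.injective h')))))
  · exact Or.inr (Or.inr (Or.inr (Or.inr (Or.inr (f.symm.toEquiv.injective h')))))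

/-- transfer of the "star with small neighbors" property along an isomorphism -/
lemma prop_map {G : SimpleGraph V} {G' : SimpleGraph W} (f : G ≃g G')
    (h : ∃ y, Nbr3 G y ∧ ∀ a, G.Adj y a → NbrLe2 G a) :
    ∃ y, Nbr3 G' y ∧ ∀ a, G'.Adj y a → NbrLe2 G' a := by
  obtain ⟨y, h3, hle⟩ := h
  refine ⟨f y, nbr3_map f h3, fun a ha => ?_⟩
  have := nbrLe2_map f (hle _ (adj_symm_of_adj f ha))
  rwa [f.apply_symm_apply] at this

lemma pick2 {α : Type*} {P : α → Prop} {z1 z2 z3 : α} (v : α) (d12 : z1 ≠ z2) (d13 : z1 ≠ z3)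
    (d23 : z2 ≠ z3) (h1 : P z1) (h2 : P z2) (h3 : P z3) :
    ∃ w w', w ≠ w' ∧ w ≠ v ∧ w' ≠ v ∧ P w ∧ P w' := by
  classical
  by_cases e1 : z1 = v
  · exact ⟨z2, z3, d23, fun h => d12 (h ▸ e1 ▸ rfl), fun h => d13 (h ▸ e1 ▸ rfl), h2, h3⟩
  · by_cases e2 : z2 = v
    · exact ⟨z1, z3, d13, e1, fun h => d23 (h ▸ e2 ▸ rfl), h1, h3⟩
    · exact ⟨z1, z2, d12, e1, e2, h1, h2⟩

lemma two_share_common {p q1 q2 q3 : Sym2 V}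
    (h1 : ∃ v, v ∈ p ∧ v ∈ q1) (h2 : ∃ v, v ∈ p ∧ v ∈ q2) (h3 : ∃ v, v ∈ p ∧ v ∈ q3) :
    ∃ v, v ∈ p ∧ ((v ∈ q1 ∧ v ∈ q2) ∨ (v ∈ q1 ∧ v ∈ q3) ∨ (v ∈ q2 ∧ v ∈ q3)) := by
  induction p using Sym2.ind with
  | _ x y =>
    obtain ⟨v1, hv1p, hv1⟩ := h1
    obtain ⟨v2, hv2p, hv2⟩ := h2
    obtain ⟨v3, hv3p, hv3⟩ := h3
    rw [Sym2.mem_iff] at hv1p hv2p hv3p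
    rcases hv1p with rfl | rfl <;> rcases hv2p with rfl | rfl <;> rcases hv3p with rfl | rfl <;>
      first
        | exact ⟨_, Sym2.mem_mk_left _ _, Or.inl ⟨hv1, hv2⟩⟩
        | exact ⟨_, Sym2.mem_mk_right _ _, Or.inl ⟨hv1, hv2⟩⟩
        | exact ⟨_, Sym2.mem_mk_left _ _, Or.inr (Or.inl ⟨hv1, hv3⟩)⟩
        | exact ⟨_, Sym2.mem_mk_right _ _, Or.inr (Or.inl ⟨hv1, hv3⟩)⟩
        | exact ⟨_, Sym2.mem_mk_left _ _, Or.inr (Or.inr ⟨hv2, hv3⟩)⟩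
        | exact ⟨_, Sym2.mem_mk_right _ _, Or.inr (Or.inr ⟨hv2, hv3⟩)⟩

lemma sub_ne_of_mem_notmem {G : SimpleGraph V} {s t : G.edgeSet} {v : V}
    (h1 : v ∈ (s : Sym2 V)) (h2 : v ∉ (t : Sym2 V)) : s ≠ t := fun h => h2 (h ▸ h1)

lemma lineGraph_clawfree (H : SimpleGraph V) (y x b c : H.edgeSet)
    (a1 : H.lineGraph.Adj y x) (a2 : H.lineGraph.Adj y b) (a3 : H.lineGraph.Adj y c)
    (hxb : x ≠ b) (hxc : x ≠ c) (hbc : b ≠ c) :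
    H.lineGraph.Adj x b ∨ H.lineGraph.Adj x c ∨ H.lineGraph.Adj b c := by
  rw [lineGraph_adj_iff_exists] at a1 a2 a3
  obtain ⟨v, -, h⟩ := two_share_common a1.2 a2.2 a3.2
  rcases h with ⟨h1, h2⟩ | ⟨h1, h2⟩ | ⟨h1, h2⟩
  · exact Or.inl (lineGraph_adj_iff_exists.2 ⟨hxb, v, h1, h2⟩)
  · exact Or.inr (Or.inl (lineGraph_adj_iff_exists.2 ⟨hxc, v, h1, h2⟩))
  · exact Or.inr (Or.inr (lineGraph_adj_iff_exists.2 ⟨hbc, v, h1, h2⟩))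

/-- From a vertex `p` of the line graph with two distinct neighbors through a common
vertex `v`, extract a star at `v` in the base graph. -/
lemma star_common (K : SimpleGraph V) (p q1 q2 : K.edgeSet) (v : V)
    (hq1 : K.lineGraph.Adj p q1) (hq2 : K.lineGraph.Adj p q2) (hq12 : q1 ≠ q2)
    (hvp : v ∈ (p : Sym2 V)) (hv1 : v ∈ (q1 : Sym2 V)) (hv2 : v ∈ (q2 : Sym2 V)) :
    ∃ x0 b c : V, x0 ≠ b ∧ x0 ≠ c ∧ b ≠ c ∧ K.Adj v x0 ∧ K.Adj v b ∧ K.Adj v c ∧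
      (p : Sym2 V) = s(v, x0) ∧ (q1 : Sym2 V) = s(v, b) ∧ (q2 : Sym2 V) = s(v, c) := by
  obtain ⟨x0, hp⟩ := Sym2.mem_iff_exists.1 hvp
  obtain ⟨b, hb⟩ := Sym2.mem_iff_exists.1 hv1
  obtain ⟨c, hc⟩ := Sym2.mem_iff_exists.1 hv2
  have hvx0 : K.Adj v x0 := K.mem_edgeSet.1 (hp ▸ p.2)
  have hvb : K.Adj v b := K.mem_edgeSet.1 (hb ▸ q1.2)
  have hvc : K.Adj v c := K.mem_edgeSet.1 (hc ▸ q2.2)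
  have hbc : b ≠ c := fun h => hq12 (Subtype.ext (by rw [hb, hc, h]))
  have hx0b : x0 ≠ b := fun h => hq1.ne (Subtype.ext (by rw [hp, hb, h]))
  have hx0c : x0 ≠ c := fun h => hq2.ne (Subtype.ext (by rw [hp, hc, h]))
  exact ⟨x0, b, c, hx0b, hx0c, hbc, hvx0, hvb, hvc, hp, hb, hc⟩

lemma step2core (K : SimpleGraph V) (p q1 q2 : K.edgeSet) (v : V)
    (hq1 : K.lineGraph.Adj p q1) (hq2 : K.lineGraph.Adj p q2) (hq12 : q1 ≠ q2)
    (hvp : v ∈ (p : Sym2 V)) (hv1 : v ∈ (q1 : Sym2 V)) (hv2 : v ∈ (q2 : Sym2 V))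
    (hle : ∀ q, K.lineGraph.Adj p q → NbrLe2 K.lineGraph q) :
    ∃ y x b c : V, x ≠ b ∧ x ≠ c ∧ b ≠ c ∧ K.Adj y x ∧ K.Adj y b ∧ K.Adj y c ∧
      ¬ K.Adj x b ∧ ¬ K.Adj x c ∧ ¬ K.Adj b c := by
  obtain ⟨x0, b, c, hx0b, hx0c, hbc, hvx0, hvb, hvc, hp, hb, hc⟩ :=
    star_common K p q1 q2 v hq1 hq2 hq12 hvp hv1 hv2
  -- claim: the second endpoint of a neighbor edge through `v` has no neighbor besides `v`
  have claim : ∀ (qA qB : K.edgeSet) (bb cc : V), qA ≠ qB →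
      K.lineGraph.Adj p qA → K.lineGraph.Adj p qB →
      (qA : Sym2 V) = s(v, bb) → (qB : Sym2 V) = s(v, cc) → ∀ u, K.Adj bb u → u = v := by
    intro qA qB bb cc hAB hA hB hAeq hBeq u hbu
    by_contra huv
    have hvbb : K.Adj v bb := K.mem_edgeSet.1 (hAeq ▸ qA.2)
    have vnotr : v ∉ (s(bb, u) : Sym2 V) := by
      rw [Sym2.mem_iff]
      rintro (rfl | rfl)
      · exact hvbb.ne rfl
      · exact huv rfl
    have hvA : v ∈ (qA : Sym2 V) := by rw [hAeq]; exact Sym2.mem_mk_left _ _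
    have hvB : v ∈ (qB : Sym2 V) := by rw [hBeq]; exact Sym2.mem_mk_left _ _
    have hbbA : bb ∈ (qA : Sym2 V) := by rw [hAeq]; exact Sym2.mem_mk_right _ _
    have A2 : K.lineGraph.Adj qA qB := lineGraph_adj_iff_exists.2 ⟨hAB, v, hvA, hvB⟩
    have A3 : K.lineGraph.Adj qA ⟨s(bb, u), K.mem_edgeSet.2 hbu⟩ :=
      lineGraph_adj_iff_exists.2
        ⟨sub_ne_of_mem_notmem hvA vnotr, bb, hbbA, Sym2.mem_mk_left _ _⟩
    rcases hle qA hA p qB _ hA.symm A2 A3 with h | h | h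
    · exact hB.ne h
    · exact sub_ne_of_mem_notmem hvp vnotr h
    · exact sub_ne_of_mem_notmem hvB vnotr h
  have bonly : ∀ u, K.Adj b u → u = v := claim q1 q2 b c hq12 hq1 hq2 hb hc
  have conly : ∀ u, K.Adj c u → u = v := claim q2 q1 c b hq12.symm hq2 hq1 hc hb
  refine ⟨v, x0, b, c, hx0b, hx0c, hbc, hvx0, hvb, hvc, ?_, ?_, ?_⟩
  · exact fun h => hvx0.ne (bonly x0 h.symm).symm
  · exact fun h => hvx0.ne (conly x0 h.symm).symm
  · exact fun h => hvc.ne (bonly c h).symm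

lemma step1core (F : SimpleGraph V) (e0 q1 q2 : F.edgeSet) (v : V)
    (hq1 : F.lineGraph.Adj e0 q1) (hq2 : F.lineGraph.Adj e0 q2) (hq12 : q1 ≠ q2)
    (hvp : v ∈ (e0 : Sym2 V)) (hv1 : v ∈ (q1 : Sym2 V)) (hv2 : v ∈ (q2 : Sym2 V))
    (hle : ∀ e, NbrLe3 F.lineGraph e) :
    ∃ y, Nbr3 F y ∧ ∀ a, F.Adj y a → NbrLe2 F a := by
  obtain ⟨x0, b, c, hx0b, hx0c, hbc, hvx0, hvb, hvc, hp, hb, hc⟩ :=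
    star_common F e0 q1 q2 v hq1 hq2 hq12 hvp hv1 hv2
  refine ⟨v, ⟨x0, b, c, hx0b, hx0c, hbc, hvx0, hvb, hvc⟩, ?_⟩
  intro a hva z1 z2 z3 hz1 hz2 hz3
  by_contra hne
  push_neg at hne
  obtain ⟨d12, d13, d23⟩ := hne
  obtain ⟨w, w', hww', hwv, hw'v, haw, haw'⟩ := pick2 v d12 d13 d23 hz1 hz2 hz3
  obtain ⟨n, n', hnn', hna, hn'a, hvn, hvn'⟩ := pick2 a hx0b hx0c hbc hvx0 hvb hvc
  have vnot : ∀ (u : V), u ≠ v → v ∉ (s(a, u) : Sym2 V) := by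
    intro u hu
    rw [Sym2.mem_iff]
    rintro (rfl | rfl)
    · exact hva.ne rfl
    · exact hu rfl
  have A1 : F.lineGraph.Adj ⟨s(v, a), F.mem_edgeSet.2 hva⟩ ⟨s(v, n), F.mem_edgeSet.2 hvn⟩ :=
    lineGraph_adj_iff_exists.2
      ⟨fun h => hna (Sym2.congr_right.1 (congrArg Subtype.val h)).symm, v,
        Sym2.mem_mk_left _ _, Sym2.mem_mk_left _ _⟩
  have A2 : F.lineGraph.Adj ⟨s(v, a), F.mem_edgeSet.2 hva⟩ ⟨s(v, n'), F.mem_edgeSet.2 hvn'⟩ :=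
    lineGraph_adj_iff_exists.2
      ⟨fun h => hn'a (Sym2.congr_right.1 (congrArg Subtype.val h)).symm, v,
        Sym2.mem_mk_left _ _, Sym2.mem_mk_left _ _⟩
  have A3 : F.lineGraph.Adj ⟨s(v, a), F.mem_edgeSet.2 hva⟩ ⟨s(a, w), F.mem_edgeSet.2 haw⟩ :=
    lineGraph_adj_iff_exists.2
      ⟨sub_ne_of_mem_notmem (Sym2.mem_mk_left v a) (vnot w hwv), a,
        Sym2.mem_mk_right _ _, Sym2.mem_mk_left _ _⟩
  have A4 : F.lineGraph.Adj ⟨s(v, a), F.mem_edgeSet.2 hva⟩ ⟨s(a, w'), F.mem_edgeSet.2 haw'⟩ :=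
    lineGraph_adj_iff_exists.2
      ⟨sub_ne_of_mem_notmem (Sym2.mem_mk_left v a) (vnot w' hw'v), a,
        Sym2.mem_mk_right _ _, Sym2.mem_mk_left _ _⟩
  rcases hle _ _ _ _ _ A1 A2 A3 A4 with h | h | h | h | h | h
  · exact hnn' (Sym2.congr_right.1 (congrArg Subtype.val h))
  · exact sub_ne_of_mem_notmem (Sym2.mem_mk_left v n) (vnot w hwv) h
  · exact sub_ne_of_mem_notmem (Sym2.mem_mk_left v n) (vnot w' hw'v) h
  · exact sub_ne_of_mem_notmem (Sym2.mem_mk_left v n') (vnot w hwv) h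
  · exact sub_ne_of_mem_notmem (Sym2.mem_mk_left v n') (vnot w' hw'v) h
  · exact hww' (Sym2.congr_right.1 (congrArg Subtype.val h))

lemma step1 (F : SimpleGraph V) (e0 : F.edgeSet)
    (h3 : Nbr3 F.lineGraph e0) (hle : ∀ e, NbrLe3 F.lineGraph e) :
    ∃ y, Nbr3 F y ∧ ∀ a, F.Adj y a → NbrLe2 F a := by
  obtain ⟨q1, q2, q3, d12, d13, d23, a1, a2, a3⟩ := h3
  obtain ⟨v, hvp, h⟩ := two_share_common (lineGraph_adj_iff_exists.1 a1).2
    (lineGraph_adj_iff_exists.1 a2).2 (lineGraph_adj_iff_exists.1 a3).2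
  rcases h with ⟨h1, h2⟩ | ⟨h1, h2⟩ | ⟨h1, h2⟩
  · exact step1core F e0 q1 q2 v a1 a2 d12 hvp h1 h2 hle
  · exact step1core F e0 q1 q3 v a1 a3 d13 hvp h1 h2 hle
  · exact step1core F e0 q2 q3 v a2 a3 d23 hvp h1 h2 hle

lemma step2 (K : SimpleGraph V) (p : K.edgeSet)
    (h3 : Nbr3 K.lineGraph p) (hle : ∀ q, K.lineGraph.Adj p q → NbrLe2 K.lineGraph q) :
    ∃ y x b c : V, x ≠ b ∧ x ≠ c ∧ b ≠ c ∧ K.Adj y x ∧ K.Adj y b ∧ K.Adj y c ∧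
      ¬ K.Adj x b ∧ ¬ K.Adj x c ∧ ¬ K.Adj b c := by
  obtain ⟨q1, q2, q3, d12, d13, d23, a1, a2, a3⟩ := h3
  obtain ⟨v, hvp, h⟩ := two_share_common (lineGraph_adj_iff_exists.1 a1).2
    (lineGraph_adj_iff_exists.1 a2).2 (lineGraph_adj_iff_exists.1 a3).2
  rcases h with ⟨h1, h2⟩ | ⟨h1, h2⟩ | ⟨h1, h2⟩
  · exact step2core K p q1 q2 v a1 a2 d12 hvp h1 h2 hle
  · exact step2core K p q1 q3 v a1 a3 d13 hvp h1 h2 hle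
  · exact step2core K p q2 q3 v a2 a3 d23 hvp h1 h2 hle

end AuxDefs

/-- No graph of maximum degree 3 is an `n`-th order line graph for `n ≥ 3`. -/
theorem maxDegree_three_no_higher_order {V : Type} [Fintype V]
    (G : SimpleGraph V) [DecidableRel G.Adj] (hd : G.maxDegree = 3) :
    ∀ n : ℕ, 3 ≤ n → ¬ IsIterLineGraph n G := by
  intro n hn h
  classical
  obtain ⟨k, rfl⟩ : ∃ k, n = k + 3 := ⟨n - 3, by omega⟩
  have h1 : ∃ (W1 : Type) (F : SimpleGraph W1),
      IsIterLineGraph (k + 2) F ∧ Nonempty (G ≃g F.lineGraph) := h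
  obtain ⟨W1, F, hF, ⟨φ⟩⟩ := h1
  have h2 : ∃ (W2 : Type) (K : SimpleGraph W2),
      IsIterLineGraph (k + 1) K ∧ Nonempty (F ≃g K.lineGraph) := hF
  obtain ⟨W2, K, hK, ⟨ψ⟩⟩ := h2
  have h3' : ∃ (W3 : Type) (H : SimpleGraph W3),
      IsIterLineGraph k H ∧ Nonempty (K ≃g H.lineGraph) := hK
  obtain ⟨W3, H, -, ⟨χ⟩⟩ := h3'
  -- facts about G coming from `maxDegree = 3`
  have hVne : Nonempty V := by
    by_contra hV
    rw [not_nonempty_iff] at hV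
    rw [SimpleGraph.maxDegree, Finset.univ_eq_empty, Finset.image_empty] at hd
    have h0 : (0 : ℕ) = 3 := hd
    omega
  obtain ⟨v0, hv0⟩ := G.exists_maximal_degree_vertex
  have hdeg : G.degree v0 = 3 := hv0.symm.trans hd
  have hB : Nbr3 G v0 := by
    have hcard : (G.neighborFinset v0).card = 3 := hdeg
    obtain ⟨a, b, c, hab, hac, hbc, hs⟩ := Finset.card_eq_three.1 hcard
    refine ⟨a, b, c, hab, hac, hbc, ?_, ?_, ?_⟩ <;>
      · rw [← SimpleGraph.mem_neighborFinset, hs]; simp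
  have hA : ∀ v, NbrLe3 G v := by
    intro v a b c d ha hb hc hd'
    by_contra hne
    push_neg at hne
    obtain ⟨n1, n2, n3, n4, n5, n6⟩ := hne
    have hsub : ({a, b, c, d} : Finset V) ⊆ G.neighborFinset v := by
      intro x hx
      simp only [Finset.mem_insert, Finset.mem_singleton] at hx
      rw [SimpleGraph.mem_neighborFinset]
      rcases hx with rfl | rfl | rfl | rfl <;> assumption
    have hcard : ({a, b, c, d} : Finset V).card = 4 := by
      rw [Finset.card_insert_of_notMem (by simp [n1, n2, n3]),
          Finset.card_insert_of_notMem (by simp [n4, n5]),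
          Finset.card_insert_of_notMem (by simp [n6]), Finset.card_singleton]
    have hge : 4 ≤ G.degree v := hcard ▸ Finset.card_le_card hsub
    have hle3 := G.degree_le_maxDegree v
    rw [hd] at hle3
    omega
  -- transfer to the line graph of F
  have hA' : ∀ e, NbrLe3 F.lineGraph e := fun e => by
    have := nbrLe3_map φ (hA (φ.symm e))
    rwa [RelIso.apply_symm_apply] at this
  have hB' : Nbr3 F.lineGraph (φ v0) := nbr3_map φ hB
  obtain ⟨p, p3, ple⟩ := prop_map ψ (step1 F (φ v0) hB' hA')
  obtain ⟨y, x, b, c, dxb, dxc, dbc, ayx, ayb, ayc, nxb, nxc, nbc⟩ := step2 K p p3 ple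
  rcases lineGraph_clawfree H (χ y) (χ x) (χ b) (χ c) (χ.map_adj_iff.2 ayx)
      (χ.map_adj_iff.2 ayb) (χ.map_adj_iff.2 ayc)
      (fun hh => dxb (χ.toEquiv.injective hh)) (fun hh => dxc (χ.toEquiv.injective hh))
      (fun hh => dbc (χ.toEquiv.injective hh)) with hh | hh | hh
  · exact nxb (χ.map_adj_iff.1 hh)
  · exact nxc (χ.map_adj_iff.1 hh)
  · exact nbc (χ.map_adj_iff.1 hh)
end
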